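/- arXiv:1903.03766 — 3 statements merged into one kernel-verified Lean document; each statement's English description precedes it below -/
import Mathlib

section
/- Let $p$ be an odd prime. Then $\sum_{k=0}^{(p+1)/2} (4k-1)^3 \frac{(-\frac{1}{2})_k^4}{k!^4} \equiv 0 \pmod{p^4}$, in the sense that the $p$-adic valuation of this rational number is at least $4$. -/
/-
The sum telescopes: by induction on `n`,
`∑_{k ≤ n} (4k-1)^3 (-1/2)_k^4 / k!^4 = (2n-1)^4 (8n^2+4n-1) (-1/2)_n^4 / n!^4`.
For `n = (p+1)/2` the factor `(2n-1)^4` is `p^4`, while `(-1/2)_n = ∏_{i<n} (2i-1)/2` and `n!`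
are built from integers of absolute value less than `p`, hence are `p`-adic units.
-/

open Finset

/-- Pochhammer symbol `(a)_k = a(a+1)⋯(a+k-1)` for a rational `a`. -/
def poch (a : ℚ) (k : ℕ) : ℚ := ∏ i ∈ Finset.range k, (a + i)

/-- Euler numbers, defined by `∑ E_n x^n/n! = 2e^x/(e^{2x}+1) = sech x`. -/
def eulerNumber : ℕ → ℤ
  | 0 => 1
  | n + 1 =>
    -∑ k ∈ (Finset.range (n + 1)).attach,
      if Even (n + 1 - k.1) then ((n + 1).choose k.1 : ℤ) * eulerNumber k.1 else 0
  decreasing_by exact Finset.mem_range.mp k.2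

/-- `x ≡ y (mod p^m)` for rationals: `v_p(x - y) ≥ m` (with `x = y` allowed). -/
def ratCongr (p m : ℕ) (x y : ℚ) : Prop :=
  x = y ∨ (m : ℤ) ≤ padicValRat p (x - y)

open Nat

lemma poch_succ (a : ℚ) (n : ℕ) : poch a (n + 1) = poch a n * (a + n) :=
  prod_range_succ _ _

lemma neg_half_add_natCast_ne_zero (i : ℕ) : -(1 / 2 : ℚ) + i ≠ 0 := by
  have : (2 * i : ℤ) - 1 ≠ 0 := by omega
  contrapose! this
  exact_mod_cast (by linarith : (2 * i : ℚ) - 1 = 0)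

lemma poch_neg_half_ne_zero (n : ℕ) : poch (-(1 / 2)) n ≠ 0 :=
  prod_ne_zero_iff.mpr fun i _ => neg_half_add_natCast_ne_zero i

theorem sum_range_cube_mul_poch_neg_half_pow_four (n : ℕ) :
    ∑ k ∈ range (n + 1), (4 * k - 1 : ℚ) ^ 3 * poch (-(1 / 2)) k ^ 4 / (k ! : ℚ) ^ 4 =
      (2 * n - 1) ^ 4 * (8 * n ^ 2 + 4 * n - 1) * poch (-(1 / 2)) n ^ 4 / (n ! : ℚ) ^ 4 := by
  induction n with
  | zero => norm_num [poch]
  | succ n ih =>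
    rw [sum_range_succ, ih, poch_succ, factorial_succ]
    push_cast
    field_simp
    ring

lemma padicValRat_intCast_eq_zero_of_natAbs_lt {p : ℕ} {z : ℤ} (hz : z ≠ 0)
    (hzp : z.natAbs < p) :
    padicValRat p z = 0 := by
  rw [padicValRat.of_int, padicValInt, padicValNat.eq_zero_of_not_dvd
    (not_dvd_of_pos_of_lt (Int.natAbs_pos.mpr hz) hzp), Nat.cast_zero]

section Valuation

variable {p : ℕ} [Fact p.Prime]

lemma padicValRat_neg_half_add_natCast (hp2 : p ≠ 2) {i : ℕ} (hi : 2 * i < p) :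
    padicValRat p (-(1 / 2) + i) = 0 := by
  have hp := (Fact.out : p.Prime).two_le
  have hdiv : -(1 / 2 : ℚ) + i = ((2 * i - 1 : ℤ) : ℚ) / ((2 : ℤ) : ℚ) := by
    push_cast
    ring
  rw [hdiv, padicValRat.div (by exact_mod_cast (by omega : (2 * i - 1 : ℤ) ≠ 0)) (by norm_num),
    padicValRat_intCast_eq_zero_of_natAbs_lt (by omega) (by omega),
    padicValRat_intCast_eq_zero_of_natAbs_lt (by omega) (by omega), sub_zero]

lemma padicValRat_poch_neg_half (hp2 : p ≠ 2) {n : ℕ} (hn : 2 * n ≤ p + 1) :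
    padicValRat p (poch (-(1 / 2)) n) = 0 := by
  induction n with
  | zero => simp [poch]
  | succ n ih =>
    have hp := (Fact.out : p.Prime).two_le
    rw [poch_succ, padicValRat.mul (poch_neg_half_ne_zero n) (neg_half_add_natCast_ne_zero n),
      ih (by omega), padicValRat_neg_half_add_natCast hp2 (by omega), add_zero]

lemma padicValRat_factorial_of_lt {n : ℕ} (hn : n < p) : padicValRat p (n ! : ℚ) = 0 := by
  rw [padicValRat.of_nat, padicValNat.eq_zero_of_not_dvd
    (fun h => hn.not_ge ((Fact.out : p.Prime).dvd_factorial.mp h)), Nat.cast_zero]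

end Valuation

theorem stmt2 (p : ℕ) (hp : p.Prime) (hodd : Odd p) :
    ratCongr p 4
      (∑ k ∈ Finset.range ((p + 1) / 2 + 1),
        (4 * k - 1 : ℚ) ^ 3 * poch (-(1/2)) k ^ 4 / (k.factorial : ℚ) ^ 4)
      0 := by
  have := Fact.mk hp
  obtain ⟨m, hm⟩ := hodd
  set n := (p + 1) / 2
  have hn : n = m + 1 := by omega
  have hp_two_le := hp.two_le
  have hpn : (2 * n - 1 : ℚ) = p := by
    rw [hn, hm]
    push_cast
    ring
  have hC : (8 * n ^ 2 + 4 * n - 1 : ℚ) ≠ 0 := by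
    have : (1 : ℚ) ≤ n := by exact_mod_cast (by omega : 1 ≤ n)
    nlinarith
  have hvC : 0 ≤ padicValRat p (8 * n ^ 2 + 4 * n - 1) := by
    have hCint : (8 * n ^ 2 + 4 * n - 1 : ℚ) = ((8 * n ^ 2 + 4 * n - 1 : ℤ) : ℚ) := by
      push_cast; rfl
    rw [hCint, padicValRat.of_int]
    positivity
  have hp0 : (p : ℚ) ≠ 0 := by exact_mod_cast hp.ne_zero
  have hP := poch_neg_half_ne_zero n
  right
  rw [sub_zero, sum_range_cube_mul_poch_neg_half_pow_four, hpn,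
    padicValRat.div (mul_ne_zero (mul_ne_zero (pow_ne_zero 4 hp0) hC) (pow_ne_zero 4 hP))
      (by positivity),
    padicValRat.mul (mul_ne_zero (pow_ne_zero 4 hp0) hC) (pow_ne_zero 4 hP),
    padicValRat.mul (pow_ne_zero 4 hp0) hC,
    padicValRat.pow, padicValRat.pow, padicValRat.pow, padicValRat.self hp.one_lt,
    padicValRat_poch_neg_half (p := p) (n := n) (by omega) (by omega),
    padicValRat_factorial_of_lt (p := p) (n := n) (by omega)]
  push_cast
  linarith
end

section
/- Let $p > 3$ be a prime. Then $\binom{p-1}{(p-1)/2} \equiv (-1)^{(p-1)/2} 4^{p-1} \pmod{p^3}$ (Morley's congruence). -/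
open Finset

open Nat

/-!
Write `p = 2m + 1` and let `A = 1 · 3 ⋯ (2m - 1)`, so that `A · 2^m m! = (2m)!`. The identity
`(p - 2k)² = p² + c_k` with `c_k = -4k(p - k)`, together with `∏_{k ≤ m} k(p - k) = (2m)!`,
gives, expanding to first order in `p²` (note `p⁴ ≡ 0`),
`A² ≡ (-4)^m (2m)! + p² ∑_k ∏_{j ≠ k} c_j (mod p³)`.
Modulo `p` we have `c_k ≡ 4k²`, so the correction sum is `∏ c · ∑_{k ≤ m} (4k²)⁻¹`, and
`∑_{k ≤ m} k⁻² ≡ 0 (mod p)` because `k` and `p - k` have the same inverse square and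
`∑_{x ∈ 𝔽_p} x² = 0` for `p > 3`. Eliminating `A` from `A² ≡ (-4)^m (2m)!` and
`A · 2^m m! = (2m)!` gives `(2m)! ≡ (-16)^m (m!)² (mod p³)`.
-/

theorem Finset.prod_add_of_mul_self_eq_zero {ι R : Type*} [CommRing R] [DecidableEq ι]
    (s : Finset ι) (c : ι → R) {ε : R} (hε : ε * ε = 0) :
    ∏ i ∈ s, (c i + ε) = ∏ i ∈ s, c i + ε * ∑ i ∈ s, ∏ j ∈ s.erase i, c j := by
  induction s using Finset.induction_on with
  | empty => simp
  | insert a s ha ih =>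
    have herase : ∀ i ∈ s, ∏ j ∈ (insert a s).erase i, c j = c a * ∏ j ∈ s.erase i, c j :=
      fun i hi => by
        rw [erase_insert_of_ne (ne_of_mem_of_not_mem hi ha).symm,
          prod_insert fun h => ha (mem_of_mem_erase h)]
    rw [prod_insert ha, ih, prod_insert ha, sum_insert ha, erase_insert ha, sum_congr rfl herase,
      ← mul_sum]
    linear_combination (∑ i ∈ s, ∏ j ∈ s.erase i, c j) * hε

theorem Finset.sum_prod_erase_eq_prod_mul_sum_inv {ι K : Type*} [Field K] [DecidableEq ι]
    (s : Finset ι) (c : ι → K) (hc : ∀ i ∈ s, c i ≠ 0) :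
    ∑ i ∈ s, ∏ j ∈ s.erase i, c j = (∏ i ∈ s, c i) * ∑ i ∈ s, (c i)⁻¹ := by
  rw [mul_sum]
  refine sum_congr rfl fun i hi => ?_
  rw [eq_mul_inv_iff_mul_eq₀ (hc i hi), prod_erase_mul _ _ hi]

theorem Nat.prod_range_two_mul_add_one_mul_two_pow_mul_factorial (m : ℕ) :
    (∏ k ∈ range m, (2 * k + 1)) * (2 ^ m * m !) = (2 * m)! := by
  induction m with
  | zero => rfl
  | succ m ih =>
    rw [prod_range_succ, pow_succ, factorial_succ, show 2 * (m + 1) = 2 * m + 1 + 1 by ring,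
      factorial_succ, factorial_succ, ← ih]
    ring

namespace ZMod

theorem natCast_ne_zero_of_pos_of_lt {n p : ℕ} (h0 : 0 < n) (hn : n < p) : (n : ZMod p) ≠ 0 :=
  fun h => absurd (Nat.le_of_dvd h0 ((natCast_eq_zero_iff n p).1 h)) (not_le.2 hn)

theorem isUnit_natCast_factorial_of_lt {p k n : ℕ} (hp : p.Prime) (hn : n < p) :
    IsUnit ((n ! : ℕ) : ZMod (p ^ k)) :=
  (isUnit_iff_coprime _ _).2 ((hp.coprime_factorial_of_lt hn).symm.pow_right k)

theorem natCast_pow_mul_eq_zero {p k : ℕ} (x : ZMod (p ^ (k + 1)))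
    (hx : castHom (dvd_pow_self p k.succ_ne_zero) (ZMod p) x = 0) :
    (p : ZMod (p ^ (k + 1))) ^ k * x = 0 := by
  obtain ⟨n, rfl⟩ := intCast_surjective x
  rw [map_intCast, intCast_zmod_eq_zero_iff_dvd] at hx
  obtain ⟨t, rfl⟩ := hx
  rw [Int.cast_mul, Int.cast_natCast, ← mul_assoc, ← pow_succ, ← Nat.cast_pow, natCast_self,
    zero_mul]

theorem sum_range_eq_sum_univ {M : Type*} [AddCommMonoid M] (n : ℕ) [NeZero n]
    (f : ZMod n → M) : ∑ k ∈ range n, f k = ∑ x : ZMod n, f x :=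
  sum_nbij' (↑) val (fun _ _ => mem_univ _) (fun x _ => mem_range.2 x.val_lt)
    (fun _ hk => val_cast_of_lt (mem_range.1 hk)) (fun x _ => natCast_zmod_val x)
    fun _ _ => rfl

variable {p : ℕ} [Fact p.Prime]

theorem sum_inv_sq_eq_zero (hp : 3 < p) : ∑ x : ZMod p, (x⁻¹) ^ 2 = 0 := by
  rw [Fintype.sum_equiv (Equiv.inv (ZMod p)) (fun x => x⁻¹ ^ 2) (· ^ 2) fun _ => rfl]
  exact FiniteField.sum_pow_lt_card_sub_one (K := ZMod p) 2 (by rw [ZMod.card]; omega)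

theorem sum_range_inv_sq_add_one_eq_zero {m : ℕ} (hp : 3 < p) (hm : p = 2 * m + 1) :
    ∑ k ∈ range m, ((k + 1 : ZMod p) ^ 2)⁻¹ = 0 := by
  have hreflect : ∑ k ∈ range m, (((m + 1 + k : ℕ) : ZMod p)⁻¹) ^ 2
      = ∑ k ∈ range m, (((k + 1 : ℕ) : ZMod p)⁻¹) ^ 2 := by
    rw [← sum_range_reflect]
    refine sum_congr rfl fun k hk => ?_
    have hsum : ((m + 1 + (m - 1 - k) : ℕ) : ZMod p) + ((k + 1 : ℕ) : ZMod p) = 0 := by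
      rw [← Nat.cast_add, show m + 1 + (m - 1 - k) + (k + 1) = p by
        have := mem_range.1 hk; omega, natCast_self]
    rw [eq_neg_of_add_eq_zero_left hsum, inv_neg, neg_sq]
  have htotal := sum_inv_sq_eq_zero hp
  rw [← sum_range_eq_sum_univ, show range p = range (m + 1 + m) by rw [hm]; ring_nf, sum_range_add,
    sum_range_succ', hreflect, Nat.cast_zero, inv_zero, zero_pow two_ne_zero, add_zero,
    ← two_mul] at htotal
  have h2 : (2 : ZMod p) ≠ 0 := by exact_mod_cast natCast_ne_zero_of_pos_of_lt two_pos (by omega)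
  simpa only [Nat.cast_add, Nat.cast_one, inv_pow] using (mul_eq_zero.1 htotal).resolve_left h2

end ZMod

section Morley

variable {p m : ℕ} [Fact p.Prime]

theorem sum_prod_erase_sq_two_mul_eq_zero (hp : 3 < p) (hm : p = 2 * m + 1) :
    ∑ k ∈ range m, ∏ j ∈ (range m).erase k, (2 * ((j : ZMod p) + 1)) ^ 2 = 0 := by
  have hne : ∀ j ∈ range m, (2 * ((j : ZMod p) + 1)) ^ 2 ≠ 0 := fun j hj => by
    have h := ZMod.natCast_ne_zero_of_pos_of_lt (p := p) (n := 2 * (j + 1)) (by omega)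
      (by have := mem_range.1 hj; omega)
    push_cast at h
    exact pow_ne_zero 2 h
  rw [sum_prod_erase_eq_prod_mul_sum_inv _ _ hne]
  simp only [mul_pow, mul_inv, ← mul_sum, ZMod.sum_range_inv_sq_add_one_eq_zero hp hm, mul_zero]

theorem sq_prod_range_two_mul_add_one_eq (hp : 3 < p) (hm : p = 2 * m + 1) :
    (∏ k ∈ range m, (2 * (k : ZMod (p ^ 3)) + 1)) ^ 2 = (-4) ^ m * ((2 * m)! : ℕ) := by
  -- `c k + p² = (2(m - 1 - k) + 1)²`, the square of the reflected odd factor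
  set c : ℕ → ZMod (p ^ 3) := fun k => -4 * (k + 1 : ZMod (p ^ 3)) * (2 * m - k : ZMod (p ^ 3))
  have hpm : (p : ZMod (p ^ 3)) = 2 * m + 1 := by
    exact_mod_cast congrArg (Nat.cast (R := ZMod (p ^ 3))) hm
  have hsq : (∏ k ∈ range m, (2 * (k : ZMod (p ^ 3)) + 1)) ^ 2
      = ∏ k ∈ range m, (c k + (p : ZMod (p ^ 3)) ^ 2) := by
    rw [← prod_range_reflect, ← prod_pow]
    refine prod_congr rfl fun k hk => ?_
    have hk := mem_range.1 hk
    rw [Nat.cast_sub (by omega), Nat.cast_sub (by omega), hpm]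
    push_cast
    ring
  have hprod : ∏ k ∈ range m, c k = (-4) ^ m * ((2 * m)! : ℕ) := by
    have hc : ∀ k ∈ range m, c k = -4 * ((k + 1 : ℕ) : ZMod (p ^ 3)) * ((2 * m - k : ℕ) : _) :=
      fun k hk => by rw [Nat.cast_sub (by have := mem_range.1 hk; omega)]; push_cast; rfl
    rw [prod_congr rfl hc, prod_mul_distrib, prod_mul_distrib, prod_const, card_range,
      ← Nat.cast_prod, ← Nat.cast_prod, prod_range_add_one_eq_factorial,
      ← descFactorial_eq_prod_range, mul_assoc, ← Nat.cast_mul,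
      ← factorial_mul_descFactorial (by omega : m ≤ 2 * m), show 2 * m - m = m by omega]
  have hcorrection : (p : ZMod (p ^ 3)) ^ 2 * ∑ k ∈ range m, ∏ j ∈ (range m).erase k, c j = 0 := by
    refine ZMod.natCast_pow_mul_eq_zero _ ?_
    have hp0 : ((2 * m + 1 : ℕ) : ZMod p) = 0 := by rw [← hm]; exact ZMod.natCast_self p
    push_cast at hp0
    have hc : ∀ j : ℕ, ZMod.castHom (dvd_pow_self p (by norm_num)) (ZMod p) (c j)
        = (2 * ((j : ZMod p) + 1)) ^ 2 := fun j => by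
      simp only [c, map_mul, map_sub, map_neg, map_add, map_one, map_ofNat, map_natCast]
      -- `2m - j ≡ -(j + 1) (mod p)`
      linear_combination (-4 * ((j : ZMod p) + 1)) * hp0
    simp only [map_sum, map_prod, hc]
    exact sum_prod_erase_sq_two_mul_eq_zero hp hm
  have hp4 : (p : ZMod (p ^ 3)) ^ 2 * (p : ZMod (p ^ 3)) ^ 2 = 0 := by
    rw [show (p : ZMod (p ^ 3)) ^ 2 * (p : ZMod (p ^ 3)) ^ 2 = (p ^ 3 : ℕ) * p by push_cast; ring,
      ZMod.natCast_self, zero_mul]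
  rw [hsq, prod_add_of_mul_self_eq_zero _ _ hp4, hcorrection, add_zero, hprod]

theorem centralBinom_eq_neg_one_pow_mul_four_pow (hp : 3 < p) (hm : p = 2 * m + 1) :
    ((m.centralBinom : ℕ) : ZMod (p ^ 3)) = (-1) ^ m * 4 ^ (2 * m) := by
  have hodd := congrArg (Nat.cast (R := ZMod (p ^ 3)))
    (prod_range_two_mul_add_one_mul_two_pow_mul_factorial m)
  have hbinom := congrArg (Nat.cast (R := ZMod (p ^ 3)))
    (choose_mul_factorial_mul_factorial (by omega : m ≤ 2 * m))
  rw [show 2 * m - m = m by omega, ← centralBinom_eq_two_mul_choose] at hbinom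
  push_cast at hodd hbinom
  have hsq := sq_prod_range_two_mul_add_one_eq hp hm
  set a : ZMod (p ^ 3) := ((m ! : ℕ) : ZMod (p ^ 3))
  set G : ZMod (p ^ 3) := (((2 * m)! : ℕ) : ZMod (p ^ 3))
  set A := ∏ k ∈ range m, (2 * (k : ZMod (p ^ 3)) + 1)
  have hG : G = (-4) ^ m * (2 ^ m * a) ^ 2 :=
    (ZMod.isUnit_natCast_factorial_of_lt (n := 2 * m) Fact.out (by omega)).mul_left_cancel (by
      linear_combination (-(A * (2 ^ m * a) + G)) * hodd + (2 ^ m * a) ^ 2 * hsq)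
  have hC : (m.centralBinom : ZMod (p ^ 3)) = (-4) ^ m * (2 ^ m) ^ 2 :=
    ((ZMod.isUnit_natCast_factorial_of_lt (n := m) Fact.out (by omega)).pow 2).mul_right_cancel
      (by linear_combination hbinom + hG)
  rw [hC, neg_pow, ← pow_mul, show (4 : ZMod (p ^ 3)) = 2 ^ 2 by norm_num, ← pow_mul, ← pow_mul]
  ring

end Morley

theorem stmt9 (p : ℕ) (hp : p.Prime) (hp3 : 3 < p) :
    (((p - 1).choose ((p - 1) / 2) : ℤ)) ≡
      (-1) ^ ((p - 1) / 2) * 4 ^ (p - 1) [ZMOD (p : ℤ) ^ 3] := by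
  have := Fact.mk hp
  obtain ⟨m, hm⟩ := hp.odd_of_ne_two (by omega)
  rw [show p - 1 = 2 * m by omega, show 2 * m / 2 = m by omega, ← centralBinom_eq_two_mul_choose,
    show (p : ℤ) ^ 3 = ((p ^ 3 : ℕ) : ℤ) by push_cast; rfl, ← ZMod.intCast_eq_intCast_iff]
  push_cast
  exact centralBinom_eq_neg_one_pow_mul_four_pow hp3 hm
end

section
/- Let $p$ be an odd prime and let $0 \le k \le (p+1)/2$. Then $\prod_{j=1}^{k} \frac{(2j-3)^2 - p^2}{(2j)^2 - p^2} \equiv \frac{(-\frac{1}{2})_k^2}{k!^2}\left(1 + p^2 \sum_{j=1}^{k}\left(\frac{1}{(2j)^2} - \frac{1}{(2j-3)^2}\right)\right) \pmod{p^4}$, the congruence being between $p$-integral rationals. -/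
open Finset

/-!
Write each factor as `(u² - q) / (v² - q)` with `u = 2j - 3`, `v = 2j`, `q = p²`, where `u` and `v`
are `p`-adic units. Then `(u² - q) / (v² - q) - (u/v)² (1 + q (1/v² - 1/u²)) = q² (u² - v²) / (v⁴ (v² - q))`
has norm at most `|q|²`, and in an ultrametric ring congruences `fᵢ ≡ wᵢ (1 + q cᵢ) mod q²` multiply to
`∏ fᵢ ≡ (∏ wᵢ) (1 + q ∑ cᵢ) mod q²`, the cross terms being multiples of `q²`. Finally
`(-1/2)_k / k! = ∏ (2j - 3) / (2j)` identifies `∏ wᵢ`.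
-/

open IsUltrametricDist

theorem norm_prod_sub_prod_mul_one_add_sum_le {R ι : Type*} [NormedCommRing R] [NormOneClass R]
    [IsUltrametricDist R] (s : Finset ι) {f w c : ι → R} {q : R} (hq : ‖q‖ ≤ 1)
    (hw : ∀ i ∈ s, ‖w i‖ ≤ 1) (hc : ∀ i ∈ s, ‖c i‖ ≤ 1)
    (hf : ∀ i ∈ s, ‖f i - w i * (1 + q * c i)‖ ≤ ‖q‖ ^ 2) :
    ‖∏ i ∈ s, f i - (∏ i ∈ s, w i) * (1 + q * ∑ i ∈ s, c i)‖ ≤ ‖q‖ ^ 2 := by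
  classical
  induction s using Finset.induction_on with
  | empty => simp
  | insert a s ha ih =>
    simp only [mem_insert, forall_eq_or_imp] at hw hc hf
    set P := ∏ i ∈ s, f i
    set W := ∏ i ∈ s, w i
    set S := ∑ i ∈ s, c i
    have hq2 : ‖q‖ ^ 2 ≤ 1 := pow_le_one₀ (norm_nonneg q) hq
    have hW : ‖W‖ ≤ 1 := (Finset.norm_prod_le _ _).trans
      (Finset.prod_le_one (fun _ _ => norm_nonneg _) hw.2)
    have hS : ‖S‖ ≤ 1 := norm_sum_le_of_forall_le_of_nonneg zero_le_one hc.2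
    have hone_add {x : R} (hx : ‖x‖ ≤ 1) : ‖1 + q * x‖ ≤ 1 :=
      (norm_add_le_max _ _).trans <| max_le norm_one.le <|
        (norm_mul_le_of_le hq hx).trans_eq (one_mul 1)
    have hP : ‖P‖ ≤ 1 := by
      rw [← sub_add_cancel P (W * (1 + q * S))]
      exact (norm_add_le_max _ _).trans <| max_le ((ih hw.2 hc.2 hf.2).trans hq2) <|
        (norm_mul_le_of_le hW (hone_add hS)).trans_eq (one_mul 1)
    have hdecomp : f a * P - w a * W * (1 + q * (c a + S)) =
        (f a - w a * (1 + q * c a)) * P + w a * (1 + q * c a) * (P - W * (1 + q * S)) +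
          q ^ 2 * (w a * W * c a * S) := by ring
    rw [prod_insert ha, prod_insert ha, sum_insert ha, hdecomp]
    have hunit : ‖w a * W * c a * S‖ ≤ 1 := by
      simpa using norm_mul_le_of_le (norm_mul_le_of_le (norm_mul_le_of_le hw.1 hW) hc.1) hS
    refine (norm_add_le_max _ _).trans (max_le ((norm_add_le_max _ _).trans (max_le ?_ ?_)) ?_)
    · simpa using norm_mul_le_of_le hf.1 hP
    · simpa using norm_mul_le_of_le (norm_mul_le_of_le hw.1 (hone_add hc.1)) (ih hw.2 hc.2 hf.2)
    · simpa using norm_mul_le_of_le (norm_pow_le q 2) hunit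

theorem norm_sq_sub_div_sq_sub_sub_le {K : Type*} [NormedField K] [IsUltrametricDist K]
    {u v q : K} (hq : ‖q‖ < 1) (hu : ‖u‖ = 1) (hv : ‖v‖ = 1) :
    ‖(u ^ 2 - q) / (v ^ 2 - q) - (u / v) ^ 2 * (1 + q * (1 / v ^ 2 - 1 / u ^ 2))‖ ≤ ‖q‖ ^ 2 := by
  have hu0 : u ≠ 0 := norm_ne_zero_iff.mp (by rw [hu]; exact one_ne_zero)
  have hv0 : v ≠ 0 := norm_ne_zero_iff.mp (by rw [hv]; exact one_ne_zero)
  have hvq : ‖v ^ 2 - q‖ = 1 := by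
    rw [sub_eq_add_neg, norm_add_eq_max_of_norm_ne_norm] <;> simp [hv, hq.ne', hq.le]
  have hvq0 : v ^ 2 - q ≠ 0 := norm_ne_zero_iff.mp (by rw [hvq]; exact one_ne_zero)
  have hidentity : (u ^ 2 - q) / (v ^ 2 - q) - (u / v) ^ 2 * (1 + q * (1 / v ^ 2 - 1 / u ^ 2)) =
      q ^ 2 * (u ^ 2 - v ^ 2) / (v ^ 4 * (v ^ 2 - q)) := by
    field_simp
    ring
  have huv : ‖u ^ 2 - v ^ 2‖ ≤ 1 := by
    rw [sub_eq_add_neg]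
    exact (norm_add_le_max _ _).trans_eq (by simp [hu, hv])
  rw [hidentity, norm_div, norm_mul, norm_mul, hvq, norm_pow, norm_pow, hv]
  simpa using mul_le_of_le_one_right (by positivity) huv

namespace Padic

variable {p : ℕ} [Fact p.Prime]

theorem norm_natCast_eq_one_of_lt {n : ℕ} (hn : n ≠ 0) (h : n < p) : ‖(n : ℚ_[p])‖ = 1 :=
  norm_natCast_eq_one_iff.mpr (Nat.coprime_of_lt_prime hn h Fact.out)

theorem norm_intCast_eq_one_of_natAbs_lt {z : ℤ} (hz : z ≠ 0) (h : z.natAbs < p) :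
    ‖(z : ℚ_[p])‖ = 1 := by
  rw [← norm_natAbs]
  exact norm_natCast_eq_one_of_lt (Int.natAbs_ne_zero.mpr hz) h

end Padic

theorem ratCongr_of_norm_sub_le {p m : ℕ} [Fact p.Prime] {x y : ℚ}
    (h : ‖(x : ℚ_[p]) - y‖ ≤ ‖(p : ℚ_[p])‖ ^ m) : ratCongr p m x y := by
  rcases eq_or_ne x y with hxy | hxy
  · exact Or.inl hxy
  right
  have hp : (1 : ℝ) < p := mod_cast (Fact.out : p.Prime).one_lt
  rw [← Rat.cast_sub, Padic.norm_eq_zpow_neg_valuation (by exact_mod_cast sub_ne_zero.mpr hxy),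
    Padic.valuation_ratCast, Padic.norm_p, inv_pow, ← zpow_natCast, ← zpow_neg,
    zpow_le_zpow_iff_right₀ hp] at h
  exact neg_le_neg_iff.mp h

theorem poch_div_factorial (a : ℚ) (k : ℕ) :
    poch a k / k.factorial = ∏ j ∈ Icc 1 k, (a + j - 1) / j := by
  induction k with
  | zero => simp [poch]
  | succ k ih =>
    rw [prod_Icc_succ_top (Nat.le_add_left 1 k), ← ih, poch, prod_range_succ, ← poch,
      Nat.factorial_succ]
    push_cast
    field_simp
    ring

theorem poch_neg_half_div_factorial (k : ℕ) :
    poch (-(1 / 2)) k / k.factorial = ∏ j ∈ Icc 1 k, (2 * (j : ℚ) - 3) / (2 * j) := by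
  rw [poch_div_factorial]
  refine prod_congr rfl fun j _ => ?_
  rw [← mul_div_mul_left _ _ (two_ne_zero' ℚ)]
  ring

theorem stmt11 (p : ℕ) (hp : p.Prime) (hodd : Odd p) (k : ℕ) (hk : k ≤ (p + 1) / 2) :
    ratCongr p 4
      (∏ j ∈ Finset.Icc 1 k,
        ((2 * (j : ℚ) - 3) ^ 2 - p ^ 2) / ((2 * j) ^ 2 - p ^ 2))
      (poch (-(1/2)) k ^ 2 / (k.factorial : ℚ) ^ 2 *
        (1 + (p : ℚ) ^ 2 * ∑ j ∈ Finset.Icc 1 k,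
          (1 / (2 * (j : ℚ)) ^ 2 - 1 / (2 * (j : ℚ) - 3) ^ 2))) := by
  have : Fact p.Prime := ⟨hp⟩
  have hp3 : 3 ≤ p := by obtain ⟨m, rfl⟩ := hodd; have := hp.two_le; omega
  have hunit (j : ℕ) (hj : j ∈ Icc 1 k) :
      ‖(2 * j - 3 : ℚ_[p])‖ = 1 ∧ ‖(2 * j : ℚ_[p])‖ = 1 := by
    rw [mem_Icc] at hj
    have h2 : ‖((2 : ℕ) : ℚ_[p])‖ = 1 := Padic.norm_natCast_eq_one_of_lt two_ne_zero (by omega)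
    refine ⟨?_, ?_⟩
    · exact_mod_cast Padic.norm_intCast_eq_one_of_natAbs_lt (z := 2 * j - 3) (by omega) (by omega)
    · rw [norm_mul, ← Nat.cast_ofNat, h2, Padic.norm_natCast_eq_one_of_lt (by omega) (by omega),
        one_mul]
  have hq : ‖(p : ℚ_[p]) ^ 2‖ < 1 := by
    rw [norm_pow]
    exact pow_lt_one₀ (norm_nonneg _) Padic.norm_p_lt_one two_ne_zero
  apply ratCongr_of_norm_sub_le
  rw [← div_pow, poch_neg_half_div_factorial, ← prod_pow, show 4 = 2 * 2 from rfl, pow_mul,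
    ← norm_pow]
  push_cast
  refine norm_prod_sub_prod_mul_one_add_sum_le _ hq.le (fun j hj => ?_) (fun j hj => ?_)
    (fun j hj => norm_sq_sub_div_sq_sub_sub_le hq (hunit j hj).1 (hunit j hj).2)
  · simp [hunit j hj]
  · rw [sub_eq_add_neg]
    exact (norm_add_le_max _ _).trans_eq (by simp [hunit j hj])
end
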